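/- arXiv:1305.1815 — 2 statements merged into one kernel-verified Lean document; each statement's English description precedes it below -/
import Mathlib

section
/- Let X be an Alexandrov space of finite height. Then a closed subset A of X is irreducible if and only if A is the closure of a singleton, i.e., there exists a ∈ A with A = closure {a}. -/
/-!
Identify each point `x` with its closure, ordered by inclusion. In an Alexandrov space every
point has a smallest open neighbourhood, so irreducibility of `A` says that any two points of `A`
have a common generization in `A`: the point closures of `A` form a directed family. Finite height
makes this family contain a maximal member `closure {a}`, and in a directed family a maximal member
is the greatest one, so `A ⊆ closure {a}`.
-/

/-- The height of a topological space: the supremum of lengths of strictly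
increasing chains of point closures, as an element of `WithBot ℕ∞`. -/
noncomputable def topHeight (X : Type*) [TopologicalSpace X] : WithBot ℕ∞ :=
  Order.krullDim {S : Set X // ∃ x : X, S = closure {x}}

open Order Set

lemma Order.wellFoundedGT_of_krullDim_ne_top {α : Type*} [Preorder α] (h : krullDim α ≠ ⊤) :
    WellFoundedGT α := by
  rw [WellFoundedGT, isWellFounded_iff, RelEmbedding.wellFounded_iff_isEmpty]
  refine ⟨fun f => h ?_⟩
  have : InfiniteDimensionalOrder α :=
    ⟨fun n => ⟨LTSeries.mk n (fun i => f i) fun _ _ hij => f.map_rel_iff.2 hij, rfl⟩⟩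
  exact krullDim_eq_top

section PointClosures

variable {X : Type*} [TopologicalSpace X]

abbrev PointClosures (X : Type*) [TopologicalSpace X] := {S : Set X // ∃ x : X, S = closure {x}}

def pointClosure (x : X) : PointClosures X := ⟨closure {x}, x, rfl⟩

lemma pointClosure_le_pointClosure_iff {x y : X} : pointClosure x ≤ pointClosure y ↔ y ⤳ x :=
  specializes_iff_closure_subset.symm

variable [AlexandrovDiscrete X] {A : Set X}

lemma IsPreirreducible.exists_specializes_of_mem (hA : IsPreirreducible A) {x y : X} (hx : x ∈ A)
    (hy : y ∈ A) : ∃ z ∈ A, z ⤳ x ∧ z ⤳ y := by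
  obtain ⟨z, hzA, hzx, hzy⟩ := hA (nhdsKer {x}) (nhdsKer {y}) isOpen_nhdsKer isOpen_nhdsKer
    ⟨x, hx, subset_nhdsKer rfl⟩ ⟨y, hy, subset_nhdsKer rfl⟩
  exact ⟨z, hzA, mem_nhdsKer_singleton.1 hzx, mem_nhdsKer_singleton.1 hzy⟩

lemma IsPreirreducible.directedOn_pointClosure (hA : IsPreirreducible A) :
    DirectedOn (· ≤ ·) (pointClosure '' A) := by
  rintro _ ⟨x, hx, rfl⟩ _ ⟨y, hy, rfl⟩
  obtain ⟨z, hz, hzx, hzy⟩ := hA.exists_specializes_of_mem hx hy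
  exact ⟨pointClosure z, mem_image_of_mem _ hz, pointClosure_le_pointClosure_iff.2 hzx,
    pointClosure_le_pointClosure_iff.2 hzy⟩

lemma IsIrreducible.exists_subset_closure_singleton [WellFoundedGT (PointClosures X)]
    (hA : IsIrreducible A) : ∃ a ∈ A, A ⊆ closure {a} := by
  obtain ⟨_, ⟨a, ha, rfl⟩, hmax⟩ :=
    exists_maximal_of_wellFoundedGT (· ∈ pointClosure '' A) (hA.nonempty.image pointClosure)
  refine ⟨a, ha, fun x hx => ?_⟩
  have hxa : pointClosure x ≤ pointClosure a :=
    hA.isPreirreducible.directedOn_pointClosure.is_top_of_is_max (mem_image_of_mem _ ha)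
      (fun _ hb => hmax hb) _ (mem_image_of_mem _ hx)
  exact specializes_iff_mem_closure.1 (pointClosure_le_pointClosure_iff.1 hxa)

end PointClosures

/-- In an Alexandrov space of finite height, a closed subset `A` is irreducible
if and only if `A` is the closure of a point of `A`. -/
theorem isIrreducible_iff_eq_closure_singleton {X : Type*} [TopologicalSpace X]
    [AlexandrovDiscrete X] (hfin : topHeight X ≠ ⊤)
    (A : Set X) (hA : IsClosed A) :
    IsIrreducible A ↔ ∃ a ∈ A, A = closure {a} := by
  have : WellFoundedGT (PointClosures X) := wellFoundedGT_of_krullDim_ne_top hfin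
  refine ⟨fun hirr => ?_, ?_⟩
  · obtain ⟨a, ha, hsub⟩ := hirr.exists_subset_closure_singleton
    exact ⟨a, ha, hsub.antisymm (hA.closure_subset_iff.2 (singleton_subset_iff.2 ha))⟩
  · rintro ⟨a, -, rfl⟩
    exact isIrreducible_singleton.closure
end

section
/- An Alexandrov space X has finite Krull dimension if and only if X has finite height. -/
open Order TopologicalSpace Set

section

variable {X : Type*} [TopologicalSpace X]

lemma topHeight_le_topologicalKrullDim : topHeight X ≤ topologicalKrullDim X :=
  krullDim_le_of_strictMono
    (fun S => ⟨S.1, S.2.elim fun _ hx => hx ▸ isIrreducible_singleton.closure,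
      S.2.elim fun _ hx => hx ▸ isClosed_closure⟩)
    fun _ _ h => h

variable [AlexandrovDiscrete X]

lemma IrreducibleCloseds.exists_closure_singleton_lt {C C' : IrreducibleCloseds X} (h : C < C')
    {x : X} (hx : x ∈ C) : ∃ y ∈ C', closure {x} < closure ({y} : Set X) := by
  have hCC' : (C : Set X) ⊂ C' := h
  obtain ⟨z, hzC', hzC⟩ := exists_of_ssubset hCC'
  obtain ⟨y, hyC', hyx, hyC⟩ := C'.isIrreducible.2 (nhdsKer {x}) (C : Set X)ᶜ isOpen_nhdsKer
    C.isClosed.isOpen_compl ⟨x, hCC'.1 hx, subset_nhdsKer rfl⟩ ⟨z, hzC', hzC⟩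
  have hxy : closure {x} ⊆ closure ({y} : Set X) :=
    specializes_iff_closure_subset.1 (mem_nhdsKer_singleton.1 hyx)
  refine ⟨y, hyC', hxy.ssubset_of_not_subset fun hyx' => hyC ?_⟩
  exact closure_minimal (singleton_subset_iff.2 hx) C.isClosed (hyx' (subset_closure rfl))

lemma IrreducibleCloseds.exists_ltSeries_closure_singleton (p : LTSeries (IrreducibleCloseds X)) :
    ∃ q : LTSeries {S : Set X // ∃ x : X, S = closure {x}},
      q.length = p.length ∧ q.last.1 ⊆ p.last := by
  induction p using RelSeries.inductionOn' with
  | singleton C =>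
    obtain ⟨x, hx⟩ := C.isIrreducible.nonempty
    exact ⟨RelSeries.singleton _ ⟨closure {x}, x, rfl⟩, rfl,
      closure_minimal (singleton_subset_iff.2 hx) C.isClosed⟩
  | snoc p C hpC ih =>
    obtain ⟨q, hlen, hlast⟩ := ih
    obtain ⟨x, hx⟩ := q.last.2
    obtain ⟨y, hyC, hxy⟩ :=
      exists_closure_singleton_lt hpC (hlast (hx ▸ subset_closure rfl : x ∈ q.last.1))
    have hqy : q.last < ⟨closure {y}, y, rfl⟩ := by rw [← Subtype.coe_lt_coe, hx]; exact hxy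
    refine ⟨q.snoc _ hqy, by simp [hlen], ?_⟩
    simpa using closure_minimal (singleton_subset_iff.2 hyC) C.isClosed

theorem topologicalKrullDim_eq_topHeight : topologicalKrullDim X = topHeight X := by
  refine le_antisymm (iSup_le fun p => ?_) topHeight_le_topologicalKrullDim
  obtain ⟨q, hlen, -⟩ := IrreducibleCloseds.exists_ltSeries_closure_singleton p
  exact hlen ▸ LTSeries.length_le_krullDim q

end

/-- An Alexandrov space has finite Krull dimension iff it has finite height. -/
theorem topologicalKrullDim_ne_top_iff_topHeight_ne_top {X : Type*} [TopologicalSpace X]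
    [AlexandrovDiscrete X] :
    topologicalKrullDim X ≠ ⊤ ↔ topHeight X ≠ ⊤ := by
  rw [topologicalKrullDim_eq_topHeight]
end
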